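/- Let (g,B) be a finite-dimensional quadratic Lie algebra over a field of characteristic 0 with a ℤ/2-grading g = k⊕p such that k and p are B-orthogonal. Let ν : k → 𝒲(p⊕p*,ω) be the Lie algebra homomorphism ν(x) = Σ_i [x,z_i] z_i* (for a basis {z_i} of p with dual basis {z_i*} ⊂ p*), and ν(Ω(k)) = Σ_k ν(w_k)ν(w^k) for a basis {w_k} of k with B-dual basis {w^k}. If B([p,p],[p,p]) ≠ {0}, then the degree-4 component (η(ν(Ω(k))))₄ is nonzero in S⁴(p⊕p*). -/

import Mathlib

noncomputable section

/-- The defining relation of the Weyl algebra of a symplectic form `ω`. -/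
def weylRel (R : Type*) [CommRing R] (U : Type*) [AddCommGroup U] [Module R U]
    (ω : U →ₗ[R] U →ₗ[R] R) : TensorAlgebra R U → TensorAlgebra R U → Prop :=
  fun a b => ∃ u w : U,
    a = TensorAlgebra.ι R u * TensorAlgebra.ι R w ∧
    b = TensorAlgebra.ι R w * TensorAlgebra.ι R u + algebraMap R _ (ω u w)

/-- The Weyl algebra of `(U, ω)`. -/
abbrev WeylAlg (R : Type*) [CommRing R] (U : Type*) [AddCommGroup U] [Module R U]
    (ω : U →ₗ[R] U →ₗ[R] R) := RingQuot (weylRel R U ω)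

/-- The canonical linear map `U → 𝒲(U,ω)`. -/
def weylι (R : Type*) [CommRing R] (U : Type*) [AddCommGroup U] [Module R U]
    (ω : U →ₗ[R] U →ₗ[R] R) : U →ₗ[R] WeylAlg R U ω :=
  (RingQuot.mkAlgHom R (weylRel R U ω)).toLinearMap ∘ₗ TensorAlgebra.ι R

/-- The canonical symplectic form on `p ⊕ p*`: `ω(p,p) = ω(p*,p*) = 0`, `ω(α,v) = α(v)`. -/
def sympForm (R : Type*) [CommRing R] (V : Type*) [AddCommGroup V] [Module R V] :
    (V × Module.Dual R V) →ₗ[R] (V × Module.Dual R V) →ₗ[R] R :=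
  LinearMap.mk₂ R (fun u w => u.2 w.1 - w.2 u.1)
    (by intro m₁ m₂ n; simp; ring)
    (by intro c m n; simp; ring)
    (by intro m n₁ n₂; simp; ring)
    (by intro c m n; simp; ring)

/-- The image of a vector `v ∈ p` in the Weyl algebra `𝒲(p ⊕ p*, ω)`. -/
def wVec (R : Type*) [CommRing R] (V : Type*) [AddCommGroup V] [Module R V] (v : V) :
    WeylAlg R (V × Module.Dual R V) (sympForm R V) :=
  weylι R (V × Module.Dual R V) (sympForm R V) (v, 0)

/-- The image of a functional `φ ∈ p*` in the Weyl algebra `𝒲(p ⊕ p*, ω)`. -/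
def wDual (R : Type*) [CommRing R] (V : Type*) [AddCommGroup V] [Module R V]
    (φ : Module.Dual R V) : WeylAlg R (V × Module.Dual R V) (sympForm R V) :=
  weylι R (V × Module.Dual R V) (sympForm R V) (0, φ)


/-!
Each `ν(x)` is the image `Σ_i [x,z_i] z_i*` of `ad x ∈ End p ≅ p ⊗ p*`, so `ν(Ω(k))` is a
combination of products `z_m z_i* z_n z_l*` of four generators. The generators commute up to
scalars, so such a product differs from the symmetrization of its monomial by products of at most
two generators, which `η` sends to polynomials of degree `≤ 2`. Hence `(ν(Ω(k)))₄` is the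
commutative product `Σ_j D(w_j) D(w^j)` of the quadratic polynomials `D(x) = Σ_i [x,z_i] z_i*`.
Evaluating at `z_m ↦ B(y₀, z_m)`, `z_i* ↦ z_i*(x₀)` gives `Σ_j B(w_j, y) B(w^j, y) = B(y, y)`
with `y = [x₀, y₀] ∈ k`, and polarization shows that `x₀, y₀ ∈ p` can be chosen with
`B(y, y) ≠ 0`.
-/

open MvPolynomial
open scoped Pointwise

theorem weylι_mul_weylι (R : Type*) [CommRing R] (U : Type*) [AddCommGroup U] [Module R U]
    (ω : U →ₗ[R] U →ₗ[R] R) (u v : U) :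
    weylι R U ω u * weylι R U ω v = weylι R U ω v * weylι R U ω u + algebraMap R _ (ω u v) := by
  simpa [weylι] using RingQuot.mkAlgHom_rel R (s := weylRel R U ω) ⟨u, v, rfl, rfl⟩

section ScalarCommutators

variable (𝕜 : Type*) {I : Type*} {W : Type*} [CommRing 𝕜] [Ring W] [Algebra 𝕜 W]

def HasScalarCommutators (e : I → W) : Prop :=
  ∀ a b, ∃ r : 𝕜, e a * e b = e b * e a + algebraMap 𝕜 W r

def wordSpan (e : I → W) (n : ℕ) : Submodule 𝕜 W :=
  Submodule.span 𝕜 {x | ∃ l : List I, l.length ≤ n ∧ (l.map e).prod = x}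

variable {𝕜} {e : I → W}

theorem mul_mem_wordSpan_succ {n : ℕ} (a : I) {x : W} (hx : x ∈ wordSpan 𝕜 e n) :
    e a * x ∈ wordSpan 𝕜 e (n + 1) := by
  induction hx using Submodule.span_induction with
  | mem y hy =>
    obtain ⟨l, hl, rfl⟩ := hy
    exact Submodule.subset_span ⟨a :: l, by simpa using hl, by simp⟩
  | zero => simp
  | add y y' _ _ hy hy' => rw [mul_add]; exact add_mem hy hy'
  | smul c y _ hy => rw [mul_smul_comm]; exact Submodule.smul_mem _ c hy

theorem prod_sub_prod_mem_wordSpan_of_perm (hcomm : HasScalarCommutators 𝕜 e)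
    {l₁ l₂ : List I} (h : l₁.Perm l₂) {n : ℕ} (hn : l₁.length ≤ n + 2) :
    (l₁.map e).prod - (l₂.map e).prod ∈ wordSpan 𝕜 e n := by
  induction h generalizing n with
  | nil => simp
  | @cons a t₁ t₂ h ih =>
    cases n with
    | zero =>
      have ht : t₁ = t₂ := by
        match t₁, h, (by simpa using hn : t₁.length ≤ 1) with
        | [], h, _ => exact h.nil_eq
        | [_], h, _ => exact List.singleton_perm.mp h
      simp [ht]
    | succ m =>
      simpa [mul_sub] using mul_mem_wordSpan_succ a (ih (n := m) (by simpa using hn))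
  | swap x y t =>
    obtain ⟨r, hr⟩ := hcomm x y
    have ht : (t.map e).prod ∈ wordSpan 𝕜 e n :=
      Submodule.subset_span ⟨t, by simpa using hn, rfl⟩
    have hswap : e y * (e x * (t.map e).prod) - e x * (e y * (t.map e).prod)
        = (-r) • (t.map e).prod := by
      rw [← mul_assoc, ← mul_assoc, ← sub_mul, hr, Algebra.smul_def]
      simp
    simpa [hswap] using Submodule.smul_mem _ (-r) ht
  | trans h₁ _ ih₁ ih₂ =>
    simpa using add_mem (ih₁ hn) (ih₂ (h₁.length_eq ▸ hn))

end ScalarCommutators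

section Symmetrization

variable (𝕜 : Type*) [Field 𝕜] {I : Type*} {W : Type*} [Ring W] [Algebra 𝕜 W]

def symmetrization (e : I → W) {m : ℕ} (c : Fin m → I) : W :=
  (m.factorial : 𝕜)⁻¹ • ∑ σ : Equiv.Perm (Fin m), (List.ofFn fun i => e (c (σ i))).prod

def IsSymmetrizationMap (Q : MvPolynomial I 𝕜 ≃ₗ[𝕜] W) (e : I → W) : Prop :=
  ∀ (m : ℕ) (c : Fin m → I), Q (∏ i, X (c i)) = symmetrization 𝕜 e c

variable {𝕜} {e : I → W}

theorem prod_sub_symmetrization_mem_wordSpan [CharZero 𝕜] (hcomm : HasScalarCommutators 𝕜 e)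
    {n : ℕ} (c : Fin (n + 2) → I) :
    (List.ofFn fun i => e (c i)).prod - symmetrization 𝕜 e c ∈ wordSpan 𝕜 e n := by
  have hfact : ((n + 2).factorial : 𝕜) ≠ 0 := Nat.cast_ne_zero.mpr (Nat.factorial_ne_zero _)
  have hmean : ((n + 2).factorial : 𝕜)⁻¹ • ∑ _σ : Equiv.Perm (Fin (n + 2)),
      (List.ofFn fun i => e (c i)).prod = (List.ofFn fun i => e (c i)).prod := by
    rw [Finset.sum_const, Finset.card_univ, Fintype.card_perm, Fintype.card_fin,
      ← Nat.cast_smul_eq_nsmul 𝕜, smul_smul, inv_mul_cancel₀ hfact, one_smul]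
  rw [← hmean, symmetrization, ← smul_sub, ← Finset.sum_sub_distrib]
  refine Submodule.smul_mem _ _ (Submodule.sum_mem _ fun σ _ => ?_)
  have hσ := prod_sub_prod_mem_wordSpan_of_perm (𝕜 := 𝕜) hcomm
    (Equiv.Perm.ofFn_comp_perm σ c).symm (n := n) (by simp)
  simpa [List.map_ofFn, Function.comp_def] using hσ

variable {Q : MvPolynomial I 𝕜 ≃ₗ[𝕜] W}

theorem symmetrization_mem_map_restrictTotalDegree (hQ : IsSymmetrizationMap 𝕜 Q e) {m : ℕ}
    (c : Fin m → I) (hm : m ≤ 2) :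
    symmetrization 𝕜 e c ∈ (restrictTotalDegree I 𝕜 2).map Q.toLinearMap := by
  refine ⟨∏ i, X (c i), ?_, hQ m c⟩
  rw [SetLike.mem_coe, mem_restrictTotalDegree]
  refine (totalDegree_finsetProd _ _).trans ?_
  simpa [totalDegree_X] using hm

theorem wordSpan_two_le [CharZero 𝕜] (hQ : IsSymmetrizationMap 𝕜 Q e)
    (hcomm : HasScalarCommutators 𝕜 e) :
    wordSpan 𝕜 e 2 ≤ (restrictTotalDegree I 𝕜 2).map Q.toLinearMap := by
  have hsymm {m : ℕ} (c : Fin m → I) := symmetrization_mem_map_restrictTotalDegree hQ c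
  rw [wordSpan, Submodule.span_le]
  rintro _ ⟨l, hl, rfl⟩
  match l, hl with
  | [], _ =>
    rw [show (([] : List I).map e).prod = symmetrization 𝕜 e Fin.elim0 by simp [symmetrization]]
    exact hsymm _ (by norm_num)
  | [a], _ =>
    rw [show ([a].map e).prod = symmetrization 𝕜 e ![a] by simp [symmetrization]]
    exact hsymm _ (by norm_num)
  | [a, b], _ =>
    obtain ⟨r, hr⟩ := hcomm a b
    have h2 : symmetrization 𝕜 e ![a, b] = (2 : 𝕜)⁻¹ • (e a * e b + e b * e a) := by
      have hperm : (Finset.univ : Finset (Equiv.Perm (Fin 2))) = {1, Equiv.swap 0 1} := by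
        decide
      rw [symmetrization, hperm, Finset.sum_pair (by decide)]
      simp
    have h0 : symmetrization 𝕜 e Fin.elim0 = 1 := by simp [symmetrization]
    have hab : ([a, b].map e).prod =
        symmetrization 𝕜 e ![a, b] + (r / 2) • symmetrization 𝕜 e Fin.elim0 := by
      rw [h2, h0, eq_sub_of_add_eq hr.symm, Algebra.algebraMap_eq_smul_one]
      simp only [List.map_cons, List.map_nil, List.prod_cons, List.prod_nil, mul_one]
      module
    rw [hab]
    exact add_mem (hsymm _ le_rfl) (Submodule.smul_mem _ _ (hsymm _ (by norm_num)))

end Symmetrization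

section PairSpan

variable (𝕜 : Type*) [Field 𝕜] {I : Type*} {W : Type*} [Ring W] [Algebra 𝕜 W]

/-- A product of pairs `(e i, X i)` records a word in the generators together with its monomial. -/
def genPairSpan (e : I → W) : Submodule 𝕜 (W × MvPolynomial I 𝕜) :=
  Submodule.span 𝕜 (Set.range fun i => (e i, X i))

variable {𝕜} [CharZero 𝕜] {e : I → W} {Q : MvPolynomial I 𝕜 ≃ₗ[𝕜] W}

theorem homogeneousComponent_four_symm_ofFn_prod
    (hcomm : HasScalarCommutators 𝕜 e) (hQ : IsSymmetrizationMap 𝕜 Q e)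
    (c : Fin 4 → I) :
    homogeneousComponent 4 (Q.symm (List.ofFn fun i => e (c i)).prod) = ∏ i, X (c i) := by
  have hlow : (List.ofFn fun i => e (c i)).prod - Q (∏ i, X (c i)) ∈ wordSpan 𝕜 e 2 := by
    rw [hQ]
    exact prod_sub_symmetrization_mem_wordSpan hcomm c
  obtain ⟨r, hr, hQr⟩ := wordSpan_two_le hQ hcomm hlow
  have hsplit : Q.symm (List.ofFn fun i => e (c i)).prod = ∏ i, X (c i) + r := by
    rw [LinearEquiv.coe_coe] at hQr
    rw [Q.symm_apply_eq, map_add, hQr]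
    abel
  have hhom : (∏ i, X (c i) : MvPolynomial I 𝕜).IsHomogeneous 4 := by
    convert IsHomogeneous.prod _ _ (fun _ => 1) fun i _ => isHomogeneous_X 𝕜 (c i)
    simp
  have hr4 : r.totalDegree < 4 := ((mem_restrictTotalDegree _ _ _).mp hr).trans_lt (by norm_num)
  rw [hsplit, map_add, homogeneousComponent_of_mem hhom, if_pos rfl,
    homogeneousComponent_eq_zero _ r hr4, add_zero]

theorem homogeneousComponent_four_symm_fst
    (hcomm : HasScalarCommutators 𝕜 e) (hQ : IsSymmetrizationMap 𝕜 Q e)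
    {q : W × MvPolynomial I 𝕜} (hq : q ∈ genPairSpan 𝕜 e ^ 4) :
    homogeneousComponent 4 (Q.symm q.1) = q.2 := by
  rw [genPairSpan, Submodule.span_pow] at hq
  let f := homogeneousComponent 4 ∘ₗ Q.symm.toLinearMap ∘ₗ LinearMap.fst 𝕜 W (MvPolynomial I 𝕜)
  suffices h : Submodule.span 𝕜 ((Set.range fun i => (e i, X i)) ^ 4) ≤
      LinearMap.eqLocus f (LinearMap.snd 𝕜 W (MvPolynomial I 𝕜)) from h hq
  rw [Submodule.span_le]
  rintro _ hmem
  obtain ⟨g, rfl⟩ := Set.mem_pow.mp hmem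
  choose c hc using fun i => (g i).2
  simp only [← hc]
  have hfst := map_list_prod (MonoidHom.fst W (MvPolynomial I 𝕜))
    (List.ofFn fun i => (e (c i), X (c i)))
  have hsnd := map_list_prod (MonoidHom.snd W (MvPolynomial I 𝕜))
    (List.ofFn fun i => (e (c i), X (c i)))
  simp only [MonoidHom.coe_fst, MonoidHom.coe_snd, List.map_ofFn, Function.comp_def] at hfst hsnd
  simp only [SetLike.mem_coe, LinearMap.mem_eqLocus, f, LinearMap.coe_comp, Function.comp_apply,
    LinearMap.fst_apply, LinearMap.snd_apply, LinearEquiv.coe_coe, hfst, hsnd, List.prod_ofFn]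
  exact homogeneousComponent_four_symm_ofFn_prod hcomm hQ c

end PairSpan

section InvariantForm

variable {𝕜 : Type*} {L : Type*} [LieRing L]

theorem lie_lie_eq_sub_of_invariant [CommRing 𝕜] [LieAlgebra 𝕜 L] (B : L →ₗ[𝕜] L →ₗ[𝕜] 𝕜)
    (hBsymm : ∀ x y, B x y = B y x) (hBinv : ∀ x y z, B ⁅x, y⁆ z = B x ⁅y, z⁆) (a b c d : L) :
    B ⁅a, b⁆ ⁅c, d⁆ = B ⁅a, c⁆ ⁅b, d⁆ - B ⁅a, d⁆ ⁅b, c⁆ := by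
  have hbcd : B a ⁅⁅b, c⁆, d⁆ = -B ⁅a, d⁆ ⁅b, c⁆ := by
    rw [← hBinv, ← lie_skew, map_neg, LinearMap.neg_apply, hBinv, hBsymm]
  rw [hBinv, leibniz_lie, map_add, hbcd, ← hBinv a c]
  ring

theorem exists_lie_self_ne_zero_of_invariant [Field 𝕜] [CharZero 𝕜] [LieAlgebra 𝕜 L]
    (B : L →ₗ[𝕜] L →ₗ[𝕜] 𝕜)
    (hBsymm : ∀ x y, B x y = B y x) (hBinv : ∀ x y z, B ⁅x, y⁆ z = B x ⁅y, z⁆)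
    (p : Submodule 𝕜 L) (h : ∃ a ∈ p, ∃ b ∈ p, ∃ c ∈ p, ∃ d ∈ p, B ⁅a, b⁆ ⁅c, d⁆ ≠ 0) :
    ∃ x ∈ p, ∃ y ∈ p, B ⁅x, y⁆ ⁅x, y⁆ ≠ 0 := by
  by_contra! hsq
  obtain ⟨a, ha, b, hb, c, hc, d, hd, hne⟩ := h
  have h1 : ∀ x ∈ p, ∀ y ∈ p, ∀ u ∈ p, B ⁅x, y⁆ ⁅u, y⁆ = 0 := by
    intro x hx y hy u hu
    have h := hsq (x + u) (p.add_mem hx hu) y hy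
    simp only [add_lie, map_add, LinearMap.add_apply, hsq x hx y hy, hsq u hu y hy,
      hBsymm ⁅u, y⁆ ⁅x, y⁆] at h
    have h2 : (2 : 𝕜) * B ⁅x, y⁆ ⁅u, y⁆ = 0 := by linear_combination h
    exact (mul_eq_zero.mp h2).resolve_left two_ne_zero
  have h2 : ∀ x ∈ p, ∀ y ∈ p, ∀ u ∈ p, ∀ t ∈ p, B ⁅x, y⁆ ⁅u, t⁆ = -B ⁅x, t⁆ ⁅u, y⁆ := by
    intro x hx y hy u hu t ht
    have h := h1 x hx (y + t) (p.add_mem hy ht) u hu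
    simp only [lie_add, map_add, LinearMap.add_apply, h1 x hx y hy u hu, h1 x hx t ht u hu] at h
    linear_combination h
  have h3 : ∀ x ∈ p, ∀ y ∈ p, ∀ u ∈ p, ∀ t ∈ p, B ⁅x, y⁆ ⁅u, t⁆ = -2 * B ⁅x, t⁆ ⁅y, u⁆ := by
    intro x hx y hy u hu t ht
    linear_combination lie_lie_eq_sub_of_invariant B hBsymm hBinv x y u t + h2 x hx u hu y hy t ht
  have hskew : B ⁅a, c⁆ ⁅d, b⁆ = -B ⁅a, c⁆ ⁅b, d⁆ := by rw [← lie_skew d b, map_neg]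
  have h4 : (3 : 𝕜) * B ⁅a, d⁆ ⁅b, c⁆ = 0 := by
    linear_combination h3 a ha d hd b hb c hc - 2 * hskew + 2 * h2 a ha c hc b hb d hd
  exact hne (by linear_combination h3 a ha b hb c hc d hd - (2 / 3 : 𝕜) * h4)

end InvariantForm

theorem sum_mul_eq_of_isDualBasis {𝕜 M ι : Type*} [CommRing 𝕜] [AddCommGroup M] [Module 𝕜 M]
    [Fintype ι] [DecidableEq ι] (B : M →ₗ[𝕜] M →ₗ[𝕜] 𝕜) (hBsymm : ∀ x y, B x y = B y x)
    {k : Submodule 𝕜 M} (w : Module.Basis ι 𝕜 k) (w' : ι → k)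
    (hw : ∀ i j, B (w i : M) (w' j : M) = if i = j then 1 else 0) (y u : k) :
    ∑ j, B (w j : M) y * B (w' j : M) u = B u y := by
  have h : ∑ j, B (w j : M) y • (B (w' j : M) ∘ₗ k.subtype) = B.flip y ∘ₗ k.subtype :=
    w.ext fun i => by simp [hBsymm _ (w i : M), hw]
  simpa [mul_comm] using LinearMap.congr_fun h u

section WeylSymbols

variable {𝕜 : Type*} [Field 𝕜] {V : Type*} [AddCommGroup V] [Module 𝕜 V] {ι : Type*}
  (z : Module.Basis ι 𝕜 V)

def weylGen : ι ⊕ ι → WeylAlg 𝕜 (V × Module.Dual 𝕜 V) (sympForm 𝕜 V) :=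
  Sum.elim (fun a => wVec 𝕜 V (z a)) (fun a => wDual 𝕜 V (z.coord a))

theorem hasScalarCommutators_weylGen : HasScalarCommutators 𝕜 (weylGen z) := by
  rintro (a | a) (b | b) <;> exact ⟨_, weylι_mul_weylι _ _ _ _ _⟩

def symOfVec : V →ₗ[𝕜] MvPolynomial (ι ⊕ ι) 𝕜 :=
  z.constr 𝕜 fun m => X (Sum.inl m)

theorem wVec_symOfVec_mem_genPairSpan (v : V) :
    (wVec 𝕜 V v, symOfVec z v) ∈ genPairSpan 𝕜 (weylGen z) := by
  let Φ := (weylι 𝕜 _ (sympForm 𝕜 V) ∘ₗ LinearMap.inl 𝕜 V (Module.Dual 𝕜 V)).prod (symOfVec z)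
  have hrange : LinearMap.range Φ ≤ genPairSpan 𝕜 (weylGen z) := by
    rw [LinearMap.range_eq_map, ← z.span_eq, Submodule.map_span_le]
    rintro _ ⟨m, rfl⟩
    exact Submodule.subset_span ⟨Sum.inl m, by simp [Φ, symOfVec, weylGen, wVec]⟩
  exact hrange ⟨v, rfl⟩

variable [Fintype ι]

def weylOfEnd (D : V →ₗ[𝕜] V) : WeylAlg 𝕜 (V × Module.Dual 𝕜 V) (sympForm 𝕜 V) :=
  ∑ i, wVec 𝕜 V (D (z i)) * wDual 𝕜 V (z.coord i)

def symOfEnd (D : V →ₗ[𝕜] V) : MvPolynomial (ι ⊕ ι) 𝕜 :=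
  ∑ i, symOfVec z (D (z i)) * X (Sum.inr i)

theorem weylOfEnd_symOfEnd_mem_genPairSpan_sq (D : V →ₗ[𝕜] V) :
    (weylOfEnd z D, symOfEnd z D) ∈ genPairSpan 𝕜 (weylGen z) ^ 2 := by
  have hpair : (weylOfEnd z D, symOfEnd z D) = ∑ i,
      (wVec 𝕜 V (D (z i)), symOfVec z (D (z i))) * (weylGen z (Sum.inr i), X (Sum.inr i)) := by
    simp [weylOfEnd, symOfEnd, Prod.ext_iff, weylGen, Prod.fst_sum, Prod.snd_sum]
  rw [hpair, pow_two]
  exact Submodule.sum_mem _ fun i _ => Submodule.mul_mem_mul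
    (wVec_symOfVec_mem_genPairSpan z _) (Submodule.subset_span ⟨Sum.inr i, rfl⟩)

theorem eval_symOfEnd (f : V →ₗ[𝕜] 𝕜) (D : V →ₗ[𝕜] V) (v : V) :
    eval (Sum.elim (fun m => f (z m)) (z.repr v)) (symOfEnd z D) = f (D v) := by
  have hvec : (aeval (Sum.elim (fun m => f (z m)) (z.repr v))).toLinearMap ∘ₗ symOfVec z = f :=
    z.ext fun m => by simp [symOfVec, z.constr_basis]
  have hvec' (u : V) : eval (Sum.elim (fun m => f (z m)) (z.repr v)) (symOfVec z u) = f u := by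
    simpa using LinearMap.congr_fun hvec u
  simp only [symOfEnd, map_sum, map_mul, hvec', eval_X, Sum.elim_inr]
  conv_rhs => rw [← z.sum_repr v]
  simp only [map_sum, map_smul, smul_eq_mul, mul_comm]

end WeylSymbols

theorem statement4_general
    (𝕜 : Type*) [Field 𝕜] [CharZero 𝕜]
    (L : Type*) [LieRing L] [LieAlgebra 𝕜 L]
    (B : L →ₗ[𝕜] L →ₗ[𝕜] 𝕜)
    (hBsymm : ∀ x y, B x y = B y x)
    (hBinv : ∀ x y z, B ⁅x, y⁆ z = B x ⁅y, z⁆)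
    (k p : Submodule 𝕜 L)
    (hkp : ∀ x ∈ k, ∀ y ∈ p, ⁅x, y⁆ ∈ p)
    (hpp : ∀ x ∈ p, ∀ y ∈ p, ⁅x, y⁆ ∈ k)
    (ιk ιp : Type) [Fintype ιk] [Fintype ιp]
    [DecidableEq ιk]
    (w : Module.Basis ιk 𝕜 ↥k) (w' : ιk → ↥k)
    (hw : ∀ i j, B ((w i : L)) ((w' j : L)) = if i = j then 1 else 0)
    (z : Module.Basis ιp 𝕜 ↥p)
    -- the Lie algebra map `ν : k → 𝒲(p⊕p*,ω)`, `ν(x) = Σ_i [x,z_i] z_i*`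
    (ν : ↥k → WeylAlg 𝕜 (↥p × Module.Dual 𝕜 ↥p) (sympForm 𝕜 ↥p))
    (hν : ∀ x : ↥k, ν x = ∑ i,
      wVec 𝕜 ↥p ⟨⁅(x : L), (z i : L)⁆, hkp _ x.2 _ (z i).2⟩ * wDual 𝕜 ↥p (z.coord i))
    (νΩk : WeylAlg 𝕜 (↥p × Module.Dual 𝕜 ↥p) (sympForm 𝕜 ↥p))
    (hνΩk : νΩk = ∑ j, ν (w j) * ν (w' j))
    -- the symmetrization map `Q : S(p⊕p*) → 𝒲(p⊕p*,ω)`, with inverse `η`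
    (Q : MvPolynomial (ιp ⊕ ιp) 𝕜 ≃ₗ[𝕜]
      WeylAlg 𝕜 (↥p × Module.Dual 𝕜 ↥p) (sympForm 𝕜 ↥p))
    (hQ : ∀ (m : ℕ) (c : Fin m → ιp ⊕ ιp),
      Q (∏ i, MvPolynomial.X (c i)) =
        (m.factorial : 𝕜)⁻¹ • ∑ σ : Equiv.Perm (Fin m),
          (List.ofFn fun i => Sum.elim (fun a => wVec 𝕜 ↥p (z a))
            (fun a => wDual 𝕜 ↥p (z.coord a)) (c (σ i))).prod)
    -- `B([p,p],[p,p]) ≠ {0}`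
    (hppB : ∃ a ∈ p, ∃ b ∈ p, ∃ c ∈ p, ∃ d ∈ p, B ⁅a, b⁆ ⁅c, d⁆ ≠ 0) :
    MvPolynomial.homogeneousComponent 4 (Q.symm νΩk) ≠ 0 := by
  let ad (x : k) : p →ₗ[𝕜] p := (LieAlgebra.ad 𝕜 L x).restrict (hkp _ x.2)
  let P := ∑ j, symOfEnd z (ad (w j)) * symOfEnd z (ad (w' j))
  have hmem : (νΩk, P) ∈ genPairSpan 𝕜 (weylGen z) ^ 4 := by
    have hpair : (νΩk, P) = ∑ j, (weylOfEnd z (ad (w j)), symOfEnd z (ad (w j))) *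
        (weylOfEnd z (ad (w' j)), symOfEnd z (ad (w' j))) := by
      simp only [Prod.ext_iff, Prod.fst_sum, Prod.snd_sum, Prod.fst_mul, Prod.snd_mul, hνΩk, hν]
      exact ⟨rfl, rfl⟩
    rw [hpair, show 4 = 2 + 2 from rfl, pow_add]
    exact Submodule.sum_mem _ fun j _ => Submodule.mul_mem_mul
      (weylOfEnd_symOfEnd_mem_genPairSpan_sq z _) (weylOfEnd_symOfEnd_mem_genPairSpan_sq z _)
  rw [homogeneousComponent_four_symm_fst (hasScalarCommutators_weylGen z) hQ hmem]
  obtain ⟨x₀, hx₀, y₀, hy₀, hB₀⟩ := exists_lie_self_ne_zero_of_invariant B hBsymm hBinv p hppB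
  let y : k := ⟨⁅x₀, y₀⁆, hpp _ hx₀ _ hy₀⟩
  have heval (x : k) : MvPolynomial.eval (Sum.elim (fun m => B y₀ (z m)) (z.repr ⟨x₀, hx₀⟩))
      (symOfEnd z (ad x)) = B x y := by
    refine (eval_symOfEnd z (B y₀ ∘ₗ p.subtype) (ad x) ⟨x₀, hx₀⟩).trans ?_
    exact (hBsymm _ _).trans (hBinv _ _ _)
  intro hP
  have hval := congrArg (MvPolynomial.eval (Sum.elim (fun m => B y₀ (z m)) (z.repr ⟨x₀, hx₀⟩))) hP
  simp only [P, map_sum, map_mul, heval, map_zero,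
    sum_mul_eq_of_isDualBasis B hBsymm w w' hw] at hval
  exact hB₀ hval

/-- For a `ℤ/2`-graded quadratic Lie algebra `g = k ⊕ p`, if
`B([p,p],[p,p]) ≠ {0}` then the degree-4 component of `η(ν(Ω(k)))` is nonzero in
`S⁴(p ⊕ p*)`.  Here `S(p ⊕ p*)` is modelled by polynomials in the basis variables
`z_i, z_i*` and `Q` is the symmetrization map, with inverse `η`. -/
theorem statement4
    (𝕜 : Type*) [Field 𝕜] [CharZero 𝕜]
    (L : Type*) [LieRing L] [LieAlgebra 𝕜 L] [FiniteDimensional 𝕜 L]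
    (B : L →ₗ[𝕜] L →ₗ[𝕜] 𝕜)
    (hBsymm : ∀ x y, B x y = B y x)
    (hBnondeg : ∀ x, (∀ y, B x y = 0) → x = 0)
    (hBinv : ∀ x y z, B ⁅x, y⁆ z = B x ⁅y, z⁆)
    (k p : Submodule 𝕜 L) (hcompl : IsCompl k p)
    (hkk : ∀ x ∈ k, ∀ y ∈ k, ⁅x, y⁆ ∈ k)
    (hkp : ∀ x ∈ k, ∀ y ∈ p, ⁅x, y⁆ ∈ p)
    (hpp : ∀ x ∈ p, ∀ y ∈ p, ⁅x, y⁆ ∈ k)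
    (horth : ∀ x ∈ k, ∀ y ∈ p, B x y = 0)
    (ιk ιp : Type) [Fintype ιk] [Fintype ιp]
    [DecidableEq ιk] [DecidableEq ιp]
    (w : Module.Basis ιk 𝕜 ↥k) (w' : ιk → ↥k)
    (hw : ∀ i j, B ((w i : L)) ((w' j : L)) = if i = j then 1 else 0)
    (z : Module.Basis ιp 𝕜 ↥p) (z' : ιp → ↥p)
    (hz : ∀ i j, B ((z i : L)) ((z' j : L)) = if i = j then 1 else 0)
    -- the Lie algebra map `ν : k → 𝒲(p⊕p*,ω)`, `ν(x) = Σ_i [x,z_i] z_i*`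
    (ν : ↥k → WeylAlg 𝕜 (↥p × Module.Dual 𝕜 ↥p) (sympForm 𝕜 ↥p))
    (hν : ∀ x : ↥k, ν x = ∑ i,
      wVec 𝕜 ↥p ⟨⁅(x : L), (z i : L)⁆, hkp _ x.2 _ (z i).2⟩ * wDual 𝕜 ↥p (z.coord i))
    (νΩk : WeylAlg 𝕜 (↥p × Module.Dual 𝕜 ↥p) (sympForm 𝕜 ↥p))
    (hνΩk : νΩk = ∑ j, ν (w j) * ν (w' j))
    -- the symmetrization map `Q : S(p⊕p*) → 𝒲(p⊕p*,ω)`, with inverse `η`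
    (Q : MvPolynomial (ιp ⊕ ιp) 𝕜 ≃ₗ[𝕜]
      WeylAlg 𝕜 (↥p × Module.Dual 𝕜 ↥p) (sympForm 𝕜 ↥p))
    (hQ : ∀ (m : ℕ) (c : Fin m → ιp ⊕ ιp),
      Q (∏ i, MvPolynomial.X (c i)) =
        (m.factorial : 𝕜)⁻¹ • ∑ σ : Equiv.Perm (Fin m),
          (List.ofFn fun i => Sum.elim (fun a => wVec 𝕜 ↥p (z a))
            (fun a => wDual 𝕜 ↥p (z.coord a)) (c (σ i))).prod)
    -- `B([p,p],[p,p]) ≠ {0}`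
    (hppB : ∃ a ∈ p, ∃ b ∈ p, ∃ c ∈ p, ∃ d ∈ p, B ⁅a, b⁆ ⁅c, d⁆ ≠ 0) :
    MvPolynomial.homogeneousComponent 4 (Q.symm νΩk) ≠ 0 :=
  statement4_general 𝕜 L B hBsymm hBinv k p hkp hpp ιk ιp w w' hw z ν hν νΩk hνΩk Q hQ hppB
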